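/- arXiv:1802.02327 — 2 statements merged into one kernel-verified Lean document; each statement's English description precedes it below -/
import Mathlib

section
/- Let 0 < μ < 1/2 and let u : ℝ → ℝ be smooth with compact support. Then the left and right Riemann–Liouville fractional integrals of u of order μ have the same L²(ℝ) norm: ∫_ℝ ((I₋^μ u)(x))² dx = ∫_ℝ ((I₊^μ u)(x))² dx. -/
open MeasureTheory Real Set

/-- Left Riemann–Liouville fractional integral of order `μ` on the whole real line:
`(I₋^μ u)(x) = (1/Γ(μ)) ∫_{-∞}^x (x−s)^{μ−1} u(s) ds`. -/
noncomputable def leftRLIntegral (μ : ℝ) (u : ℝ → ℝ) (x : ℝ) : ℝ :=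
  (1 / Real.Gamma μ) * ∫ s in Set.Iio x, (x - s) ^ (μ - 1) * u s

/-- Right Riemann–Liouville fractional integral of order `μ` on the whole real line:
`(I₊^μ u)(x) = (1/Γ(μ)) ∫_x^∞ (s−x)^{μ−1} u(s) ds`. -/
noncomputable def rightRLIntegral (μ : ℝ) (u : ℝ → ℝ) (x : ℝ) : ℝ :=
  (1 / Real.Gamma μ) * ∫ s in Set.Ioi x, (s - x) ^ (μ - 1) * u s

/-! ### Auxiliary kernel -/

noncomputable def gk (ν r : ℝ) : ℝ := if 0 < r then r ^ ν else 0

lemma gk_of_pos {ν r : ℝ} (h : 0 < r) : gk ν r = r ^ ν := if_pos h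

lemma gk_of_nonpos {ν r : ℝ} (h : r ≤ 0) : gk ν r = 0 := if_neg (not_lt.mpr h)

lemma gk_nonneg (ν r : ℝ) : 0 ≤ gk ν r := by
  unfold gk
  split
  · exact Real.rpow_nonneg (le_of_lt (by assumption)) _
  · exact le_refl 0

lemma gk_measurable (ν : ℝ) : Measurable (gk ν) :=
  Measurable.ite measurableSet_Ioi (by fun_prop) measurable_const

lemma gk_le_rpow {ν : ℝ} (hν : ν ≤ 0) {a r : ℝ} (ha : 0 < a) (har : a ≤ r) :
    gk ν r ≤ a ^ ν := by
  rw [gk_of_pos (lt_of_lt_of_le ha har)]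
  exact Real.rpow_le_rpow_of_nonpos ha har hν

/-- Integrability of `y ↦ gk ν (y+r) * gk ν y` for `r > 0`. -/
lemma gk_mul_integrable {ν : ℝ} (hν1 : -1 < ν) (hν2 : ν < -(1/2)) {r : ℝ} (hr : 0 < r) :
    Integrable (fun y => gk ν (y + r) * gk ν y) := by
  have hν0 : ν ≤ 0 := by linarith
  have hm : Measurable fun y : ℝ => gk ν (y + r) * gk ν y :=
    ((gk_measurable ν).comp (measurable_id.add_const r)).mul (gk_measurable ν)
  have h1 : IntegrableOn (fun y => gk ν (y + r) * gk ν y) (Ioc 0 1) := by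
    have hbase : IntegrableOn (fun y : ℝ => y ^ ν) (Ioc 0 1) :=
      (intervalIntegrable_iff_integrableOn_Ioc_of_le zero_le_one).1
        (intervalIntegral.intervalIntegrable_rpow' hν1)
    refine Integrable.mono' (hbase.const_mul (r ^ ν)) hm.aestronglyMeasurable.restrict ?_
    refine (ae_restrict_iff' measurableSet_Ioc).2 (ae_of_all _ fun y hy => ?_)
    rw [Real.norm_eq_abs, abs_of_nonneg (mul_nonneg (gk_nonneg _ _) (gk_nonneg _ _)),
      gk_of_pos hy.1]
    exact mul_le_mul (gk_le_rpow hν0 hr (by linarith [hy.1.le])) le_rfl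
      (Real.rpow_nonneg hy.1.le ν) (Real.rpow_nonneg hr.le ν)
  have h2 : IntegrableOn (fun y => gk ν (y + r) * gk ν y) (Ioi 1) := by
    have hbase : IntegrableOn (fun y : ℝ => y ^ (ν + ν)) (Ioi 1) :=
      integrableOn_Ioi_rpow_of_lt (by linarith) one_pos
    refine Integrable.mono' hbase hm.aestronglyMeasurable.restrict ?_
    refine (ae_restrict_iff' measurableSet_Ioi).2 (ae_of_all _ fun y hy => ?_)
    have hy0 : (0:ℝ) < y := lt_trans one_pos hy
    rw [Real.norm_eq_abs, abs_of_nonneg (mul_nonneg (gk_nonneg _ _) (gk_nonneg _ _)),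
      gk_of_pos hy0, Real.rpow_add hy0]
    exact mul_le_mul (gk_le_rpow hν0 hy0 (by linarith)) le_rfl
      (Real.rpow_nonneg hy0.le ν) (Real.rpow_nonneg hy0.le ν)
  have h3 : IntegrableOn (fun y => gk ν (y + r) * gk ν y) (Ioi 0) := by
    rw [← Ioc_union_Ioi_eq_Ioi (zero_le_one (α := ℝ))]
    exact h1.union h2
  have heq : (fun y => gk ν (y + r) * gk ν y)
      = (Ioi (0:ℝ)).indicator (fun y => gk ν (y + r) * gk ν y) := by
    funext y
    by_cases hy : y ∈ Ioi (0:ℝ)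
    · rw [indicator_of_mem hy]
    · have hy0 : y ≤ 0 := not_lt.1 (by simpa using hy)
      rw [indicator_of_notMem hy, gk_of_nonpos (r := y) hy0, mul_zero]
  rw [heq]
  exact (integrable_indicator_iff measurableSet_Ioi).2 h3

/-- The self-correlation bound for the kernel. -/
lemma gk_kernel_bound {ν : ℝ} (hν1 : -1 < ν) (hν2 : ν < -(1/2)) {r : ℝ} (hr : 0 < r) :
    (∫ y, gk ν (y + r) * gk ν y)
      ≤ (1/(ν+1) + (-1)/(ν+ν+1)) * r ^ (ν+ν+1) := by
  have hν0 : ν ≤ 0 := by linarith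
  have hint := gk_mul_integrable hν1 hν2 hr
  have hzero : ∀ y ∉ Ioi (0:ℝ), gk ν (y + r) * gk ν y = 0 := fun y hy => by
    rw [gk_of_nonpos (not_lt.1 hy), mul_zero]
  rw [← setIntegral_eq_integral_of_forall_compl_eq_zero hzero,
    ← Ioc_union_Ioi_eq_Ioi hr.le,
    setIntegral_union (Ioc_disjoint_Ioi le_rfl) measurableSet_Ioi
      hint.integrableOn hint.integrableOn]
  have hb1 : IntegrableOn (fun y : ℝ => r ^ ν * y ^ ν) (Ioc 0 r) :=
    ((intervalIntegrable_iff_integrableOn_Ioc_of_le hr.le).1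
      (intervalIntegral.intervalIntegrable_rpow' hν1)).const_mul _
  have hb2 : IntegrableOn (fun y : ℝ => y ^ (ν + ν)) (Ioi r) :=
    integrableOn_Ioi_rpow_of_lt (by linarith) hr
  have e1 : (∫ y in Ioc 0 r, gk ν (y + r) * gk ν y) ≤ ∫ y in Ioc 0 r, r ^ ν * y ^ ν := by
    refine setIntegral_mono_on hint.integrableOn hb1 measurableSet_Ioc fun y hy => ?_
    rw [gk_of_pos hy.1]
    exact mul_le_mul (gk_le_rpow hν0 hr (by linarith [hy.1.le])) le_rfl
      (Real.rpow_nonneg hy.1.le ν) (Real.rpow_nonneg hr.le ν)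
  have e2 : (∫ y in Ioi r, gk ν (y + r) * gk ν y) ≤ ∫ y in Ioi r, y ^ (ν + ν) := by
    refine setIntegral_mono_on hint.integrableOn hb2 measurableSet_Ioi fun y hy => ?_
    have hy0 : 0 < y := lt_trans hr hy
    rw [gk_of_pos hy0, Real.rpow_add hy0]
    exact mul_le_mul (gk_le_rpow hν0 hy0 (by linarith)) le_rfl
      (Real.rpow_nonneg hy0.le ν) (Real.rpow_nonneg hy0.le ν)
  have hsplit : r ^ (ν+ν+1) = r ^ ν * r ^ (ν+1) := by
    rw [← Real.rpow_add hr]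
    congr 1
    ring
  have v1 : (∫ y in Ioc 0 r, r ^ ν * y ^ ν) = r ^ (ν+ν+1) / (ν+1) := by
    rw [integral_const_mul, ← intervalIntegral.integral_of_le hr.le,
      integral_rpow (Or.inl hν1),
      Real.zero_rpow (show (0:ℝ) < ν + 1 by linarith).ne', sub_zero, hsplit]
    ring
  have v2 : (∫ y in Ioi r, y ^ (ν + ν)) = r ^ (ν+ν+1) * ((-1)/(ν+ν+1)) := by
    rw [integral_Ioi_rpow_of_lt (by linarith) hr]
    ring
  refine le_trans (add_le_add e1 e2) (le_of_eq ?_)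
  rw [v1, v2]; ring

lemma gk_slice_integrable_lt {ν : ℝ} (hν1 : -1 < ν) (hν2 : ν < -(1/2)) {s t : ℝ}
    (h : s < t) : Integrable (fun x => gk ν (x - s) * gk ν (x - t)) := by
  have base := (gk_mul_integrable hν1 hν2 (sub_pos.2 h)).comp_sub_right t
  have key : (fun x => gk ν (x - s) * gk ν (x - t))
      = fun x => gk ν ((x - t) + (t - s)) * gk ν (x - t) := by
    funext x; rw [show (x - t) + (t - s) = x - s by ring]
  rw [key]; exact base

lemma gk_slice_integrable {ν : ℝ} (hν1 : -1 < ν) (hν2 : ν < -(1/2)) {s t : ℝ}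
    (h : s ≠ t) : Integrable (fun x => gk ν (x - s) * gk ν (x - t)) := by
  rcases h.lt_or_gt with h | h
  · exact gk_slice_integrable_lt hν1 hν2 h
  · have key : (fun x => gk ν (x - s) * gk ν (x - t))
        = fun x => gk ν (x - t) * gk ν (x - s) := by
      funext x; ring
    rw [key]; exact gk_slice_integrable_lt hν1 hν2 h

/-- The correlation kernel. -/
noncomputable def Kk (ν s t : ℝ) : ℝ := ∫ x, gk ν (x - s) * gk ν (x - t)

lemma Kk_nonneg (ν s t : ℝ) : 0 ≤ Kk ν s t :=
  integral_nonneg fun x => mul_nonneg (gk_nonneg _ _) (gk_nonneg _ _)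

lemma Kk_shift (ν s t : ℝ) : Kk ν s t = ∫ y, gk ν (y + (t - s)) * gk ν y := by
  unfold Kk
  rw [← integral_sub_right_eq_self (fun y => gk ν (y + (t - s)) * gk ν y) t]
  congr 1; funext x
  show gk ν (x - s) * gk ν (x - t) = gk ν ((x - t) + (t - s)) * gk ν (x - t)
  rw [show (x - t) + (t - s) = x - s by ring]

lemma Kk_comm (ν s t : ℝ) : Kk ν s t = Kk ν t s := by
  unfold Kk; congr 1; funext x; ring

lemma Kk_le {ν : ℝ} (hν1 : -1 < ν) (hν2 : ν < -(1/2)) {s t : ℝ} (h : s ≠ t) :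
    Kk ν s t ≤ (1/(ν+1) + (-1)/(ν+ν+1)) * |s - t| ^ (ν+ν+1) := by
  rcases h.lt_or_gt with h | h
  · rw [Kk_shift, abs_sub_comm, abs_of_pos (sub_pos.2 h)]
    exact gk_kernel_bound hν1 hν2 (sub_pos.2 h)
  · rw [Kk_comm, Kk_shift, abs_of_pos (sub_pos.2 h)]
    exact gk_kernel_bound hν1 hν2 (sub_pos.2 h)

lemma Kk_reflect (ν s t : ℝ) : (∫ x, gk ν (s - x) * gk ν (t - x)) = Kk ν s t := by
  unfold Kk
  rw [← integral_sub_left_eq_self (fun y => gk ν (y - s) * gk ν (y - t)) volume (s + t)]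
  congr 1; funext x
  show gk ν (s - x) * gk ν (t - x) = gk ν ((s + t - x) - s) * gk ν ((s + t - x) - t)
  rw [show s + t - x - s = t - x by ring, show s + t - x - t = s - x by ring, mul_comm]

lemma Kk_stronglyMeasurable (ν : ℝ) :
    StronglyMeasurable fun p : ℝ × ℝ => Kk ν p.1 p.2 := by
  have hm : Measurable fun q : ℝ × (ℝ × ℝ) => gk ν (q.1 - q.2.1) * gk ν (q.1 - q.2.2) :=
    ((gk_measurable ν).comp (measurable_fst.sub (measurable_fst.comp measurable_snd))).mul
      ((gk_measurable ν).comp (measurable_fst.sub (measurable_snd.comp measurable_snd)))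
  exact hm.stronglyMeasurable.integral_prod_left'

/-- Almost every pair of reals is off the diagonal. -/
lemma ae_fst_ne_snd : ∀ᵐ p : ℝ × ℝ, p.1 ≠ p.2 := by
  have hd : (volume : Measure (ℝ × ℝ)) {p : ℝ × ℝ | p.1 = p.2} = 0 := by
    rw [Measure.volume_eq_prod,
      Measure.prod_apply (measurableSet_eq_fun measurable_fst measurable_snd)]
    have hx : ∀ x : ℝ, (Prod.mk x ⁻¹' {p : ℝ × ℝ | p.1 = p.2}) = {x} := by
      intro x; ext y; simp [eq_comm]
    simp_rw [hx, Real.volume_singleton, lintegral_zero]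
  rw [ae_iff]
  convert hd using 2
  simp [not_not]

/-- The Fubini step: the square of the `L²` pairing expands into a double integral. -/
lemma master (k u : ℝ → ℝ) (hk : Measurable k) (hu : Measurable u)
    (hslice : ∀ᵐ p : ℝ × ℝ,
      Integrable fun x => k (x - p.1) * u p.1 * (k (x - p.2) * u p.2))
    (hker : Integrable fun p : ℝ × ℝ =>
      ∫ x, ‖k (x - p.1) * u p.1 * (k (x - p.2) * u p.2)‖) :
    (∫ x : ℝ, (∫ s : ℝ, k (x - s) * u s) ^ 2)
      = ∫ p : ℝ × ℝ, ∫ x : ℝ, k (x - p.1) * u p.1 * (k (x - p.2) * u p.2) := by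
  have hm : AEStronglyMeasurable
      (fun q : ℝ × (ℝ × ℝ) => k (q.1 - q.2.1) * u q.2.1 * (k (q.1 - q.2.2) * u q.2.2))
      ((volume : Measure ℝ).prod (volume : Measure (ℝ × ℝ))) := by
    apply Measurable.aestronglyMeasurable
    exact ((hk.comp (measurable_fst.sub (measurable_fst.comp measurable_snd))).mul
        (hu.comp (measurable_fst.comp measurable_snd))).mul
      ((hk.comp (measurable_fst.sub (measurable_snd.comp measurable_snd))).mul
        (hu.comp (measurable_snd.comp measurable_snd)))
  have hint : Integrable
      (Function.uncurry fun (x : ℝ) (p : ℝ × ℝ) =>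
        k (x - p.1) * u p.1 * (k (x - p.2) * u p.2))
      ((volume : Measure ℝ).prod (volume : Measure (ℝ × ℝ))) := by
    refine (integrable_prod_iff' hm).2 ⟨hslice, hker⟩
  have h1 : ∀ x : ℝ, (∫ s : ℝ, k (x - s) * u s) ^ 2
      = ∫ p : ℝ × ℝ, k (x - p.1) * u p.1 * (k (x - p.2) * u p.2) := by
    intro x
    rw [pow_two, Measure.volume_eq_prod]
    exact (integral_prod_mul (fun s : ℝ => k (x - s) * u s)
      (fun s : ℝ => k (x - s) * u s)).symm
  calc (∫ x : ℝ, (∫ s : ℝ, k (x - s) * u s) ^ 2)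
      = ∫ x : ℝ, ∫ p : ℝ × ℝ, k (x - p.1) * u p.1 * (k (x - p.2) * u p.2) := by
        simp_rw [h1]
    _ = ∫ p : ℝ × ℝ, ∫ x : ℝ, k (x - p.1) * u p.1 * (k (x - p.2) * u p.2) :=
        integral_integral_swap hint

/-- Integrability of `|y|^q` on a symmetric interval, for `q > -1`. -/
lemma integrableOn_abs_rpow {q : ℝ} (hq : -1 < q) {c : ℝ} (hc : 0 < c) :
    IntegrableOn (fun y : ℝ => |y| ^ q) (Icc (-c) c) := by
  have hpos : IntegrableOn (fun y : ℝ => |y| ^ q) (Icc 0 c) := by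
    have h0 : IntegrableOn (fun y : ℝ => y ^ q) (Icc 0 c) :=
      (integrableOn_Icc_iff_integrableOn_Ioc enorm_ne_top).2
        ((intervalIntegrable_iff_integrableOn_Ioc_of_le hc.le).1
          (intervalIntegral.intervalIntegrable_rpow' hq))
    refine h0.congr_fun (fun y hy => ?_) measurableSet_Icc
    rw [abs_of_nonneg hy.1]
  have hneg : IntegrableOn (fun y : ℝ => |y| ^ q) (Icc (-c) 0) := by
    rw [← Measure.map_neg_eq_self (volume : Measure ℝ)]
    have hemb : MeasurableEmbedding fun x : ℝ => -x :=
      (Homeomorph.neg ℝ).measurableEmbedding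
    rw [hemb.integrableOn_map_iff]
    simp only [Function.comp_def, abs_neg, neg_preimage, neg_Icc, neg_zero, neg_neg]
    exact hpos
  have : Icc (-c) (0:ℝ) ∪ Icc 0 c = Icc (-c) c :=
    Icc_union_Icc_eq_Icc (by linarith) hc.le
  rw [← this]
  exact hneg.union hpos

theorem stmt11 (μ : ℝ) (hμ0 : 0 < μ) (hμ : μ < 1 / 2) (u : ℝ → ℝ)
    (hu : ContDiff ℝ (⊤ : ℕ∞) u) (hcs : HasCompactSupport u) :
    ∫ x : ℝ, (leftRLIntegral μ u x) ^ 2 = ∫ x : ℝ, (rightRLIntegral μ u x) ^ 2 := by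
  set ν : ℝ := μ - 1 with hν
  have hν1 : -1 < ν := by simp only [hν]; linarith
  have hν2 : ν < -(1/2) := by simp only [hν]; linarith
  have hucont : Continuous u := hu.continuous
  have hum : Measurable u := hucont.measurable
  -- bound and support radius for u
  obtain ⟨M, hM⟩ := hcs.exists_bound_of_continuous hucont
  have hM0 : 0 ≤ M := le_trans (norm_nonneg (u 0)) (hM 0)
  obtain ⟨r₀, hr₀⟩ := (Metric.isBounded_iff_subset_closedBall 0).1 hcs.isBounded
  set A : ℝ := max r₀ 0 + 1 with hA
  have hA0 : (0:ℝ) < A := by positivity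
  have hsupp : ∀ ⦃x : ℝ⦄, u x ≠ 0 → x ∈ Icc (-A) A := by
    intro x hx
    have hx1 : x ∈ tsupport u := subset_tsupport u hx
    have hx2 := hr₀ hx1
    rw [Metric.mem_closedBall, Real.dist_eq, sub_zero] at hx2
    have : |x| ≤ A := by
      refine le_trans hx2 ?_
      simp only [hA]
      have := le_max_left r₀ (0:ℝ)
      linarith
    exact ⟨neg_le_of_abs_le this, le_of_abs_le this⟩
  set q : ℝ := ν + ν + 1 with hq
  have hq1 : -1 < q := by simp only [hq]; linarith
  set C : ℝ := 1/(ν+1) + (-1)/(ν+ν+1) with hC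
  have hC0 : 0 ≤ C := by
    have h1 : (0:ℝ) < ν + 1 := by linarith
    have h2 : ν + ν + 1 < 0 := by linarith
    have ha : (0:ℝ) ≤ (-1)/(ν+ν+1) := by
      rw [div_nonneg_iff]; right; constructor <;> linarith
    have hb : (0:ℝ) ≤ 1/(ν+1) := le_of_lt (div_pos one_pos h1)
    simp only [hC]; linarith
  -- the dominating function on ℝ²
  set ψ : ℝ → ℝ := fun y => (Icc (-(2*A)) (2*A)).indicator (fun y => |y| ^ q) y with hψ
  have hψ_nonneg : ∀ y, 0 ≤ ψ y := fun y =>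
    indicator_nonneg (fun z _ => Real.rpow_nonneg (abs_nonneg z) q) y
  have hψ_meas : Measurable ψ :=
    (Measurable.indicator (by fun_prop) measurableSet_Icc)
  have hψ_int : Integrable ψ :=
    (integrable_indicator_iff measurableSet_Icc).2
      (integrableOn_abs_rpow hq1 (by positivity))
  set ind : ℝ → ℝ := fun t => (Icc (-A) A).indicator (fun _ => (1:ℝ)) t with hind
  have hind_nonneg : ∀ t, 0 ≤ ind t := fun t =>
    indicator_nonneg (fun _ _ => zero_le_one) t
  have hind_meas : Measurable ind :=
    Measurable.indicator measurable_const measurableSet_Icc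
  have hind_int : Integrable ind :=
    (integrable_indicator_iff measurableSet_Icc).2
      (integrableOn_const (C := (1:ℝ)) measure_Icc_lt_top.ne)
  -- the 2-dimensional dominating function is integrable
  have hB : Integrable (fun p : ℝ × ℝ => ind p.2 * ψ (p.1 - p.2)) := by
    rw [show (volume : Measure (ℝ × ℝ)) = (volume : Measure ℝ).prod (volume : Measure ℝ)
      from Measure.volume_eq_prod ℝ ℝ]
    have hmB : AEStronglyMeasurable (fun p : ℝ × ℝ => ind p.2 * ψ (p.1 - p.2))
        ((volume : Measure ℝ).prod (volume : Measure ℝ)) :=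
      ((hind_meas.comp measurable_snd).mul
        (hψ_meas.comp (measurable_fst.sub measurable_snd))).aestronglyMeasurable
    refine (integrable_prod_iff' hmB).2 ⟨?_, ?_⟩
    · refine ae_of_all _ fun t => ?_
      have h := (hψ_int.comp_sub_right t).const_mul (ind t)
      exact h
    · show Integrable (fun t : ℝ => ∫ s, ‖ind t * ψ (s - t)‖)
      have hkey : (fun t : ℝ => ∫ s, ‖ind t * ψ (s - t)‖)
          = fun t : ℝ => (∫ y, ψ y) * ind t := by
        funext t
        have h1 : ∀ s : ℝ, ‖ind t * ψ (s - t)‖ = ind t * ψ (s - t) := fun s => by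
          rw [Real.norm_eq_abs,
            abs_of_nonneg (mul_nonneg (hind_nonneg t) (hψ_nonneg _))]
        simp_rw [h1]
        rw [integral_const_mul, integral_sub_right_eq_self ψ t, mul_comm]
      rw [hkey]
      exact hind_int.const_mul _
  have hae := ae_fst_ne_snd
  -- key integrability for Fubini (left kernel)
  have hkerK : Integrable (fun p : ℝ × ℝ => |u p.1 * u p.2| * Kk ν p.1 p.2) := by
    refine Integrable.mono' (hB.const_mul (M * M * C)) ?_ ?_
    · exact (((hum.comp measurable_fst).mul (hum.comp measurable_snd)).abs.mul
        (Kk_stronglyMeasurable ν).measurable).aestronglyMeasurable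
    · filter_upwards [hae] with p hp
      have hK0 := Kk_nonneg ν p.1 p.2
      rw [Real.norm_eq_abs, abs_of_nonneg (mul_nonneg (abs_nonneg _) hK0)]
      by_cases hz : u p.1 * u p.2 = 0
      · rw [hz, abs_zero, zero_mul]
        have : 0 ≤ ind p.2 * ψ (p.1 - p.2) :=
          mul_nonneg (hind_nonneg _) (hψ_nonneg _)
        positivity
      · have h1 : u p.1 ≠ 0 := fun h => hz (by rw [h, zero_mul])
        have h2 : u p.2 ≠ 0 := fun h => hz (by rw [h, mul_zero])
        have hp1 := hsupp h1
        have hp2 := hsupp h2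
        have habs1 : |p.1| ≤ A := abs_le.2 ⟨hp1.1, hp1.2⟩
        have habs2 : |p.2| ≤ A := abs_le.2 ⟨hp2.1, hp2.2⟩
        have hdist : |p.1 - p.2| ≤ 2 * A := by
          calc |p.1 - p.2| ≤ |p.1| + |p.2| := abs_sub _ _
            _ ≤ 2 * A := by linarith
        have hmem : p.1 - p.2 ∈ Icc (-(2*A)) (2*A) := by
          rcases abs_le.1 hdist with ⟨hl, hr⟩
          exact ⟨hl, hr⟩
        have hψval : ψ (p.1 - p.2) = |p.1 - p.2| ^ q := indicator_of_mem hmem _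
        have hindval : ind p.2 = 1 := indicator_of_mem hp2 _
        rw [hindval, hψval]
        have hb1 : |u p.1| ≤ M := by have := hM p.1; rwa [Real.norm_eq_abs] at this
        have hb2 : |u p.2| ≤ M := by have := hM p.2; rwa [Real.norm_eq_abs] at this
        have huu : |u p.1 * u p.2| ≤ M * M := by
          rw [abs_mul]
          exact mul_le_mul hb1 hb2 (abs_nonneg _) hM0
        have hKle := Kk_le hν1 hν2 hp
        calc |u p.1 * u p.2| * Kk ν p.1 p.2
            ≤ (M * M) * (C * |p.1 - p.2| ^ q) := by
              refine mul_le_mul huu ?_ hK0 (by positivity)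
              simpa only [hC, hq] using hKle
          _ = M * M * C * (1 * |p.1 - p.2| ^ q) := by ring
  -- slice integrability (left kernel)
  have hslice : ∀ᵐ p : ℝ × ℝ,
      Integrable fun x => gk ν (x - p.1) * u p.1 * (gk ν (x - p.2) * u p.2) := by
    filter_upwards [hae] with p hp
    have base := (gk_slice_integrable hν1 hν2 hp).const_mul (u p.1 * u p.2)
    have key : (fun x => gk ν (x - p.1) * u p.1 * (gk ν (x - p.2) * u p.2))
        = fun x => u p.1 * u p.2 * (gk ν (x - p.1) * gk ν (x - p.2)) := by
      funext x; ring
    rw [key]; exact base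
  -- the ‖·‖-integral function equals |u·u|·K (left kernel)
  have hkereq : (fun p : ℝ × ℝ =>
        ∫ x, ‖gk ν (x - p.1) * u p.1 * (gk ν (x - p.2) * u p.2)‖)
      = fun p : ℝ × ℝ => |u p.1 * u p.2| * Kk ν p.1 p.2 := by
    funext p
    have h1 : ∀ x : ℝ, ‖gk ν (x - p.1) * u p.1 * (gk ν (x - p.2) * u p.2)‖
        = |u p.1 * u p.2| * (gk ν (x - p.1) * gk ν (x - p.2)) := by
      intro x
      rw [Real.norm_eq_abs, abs_mul, abs_mul, abs_mul,
        abs_of_nonneg (gk_nonneg ν (x - p.1)), abs_of_nonneg (gk_nonneg ν (x - p.2)),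
        abs_mul]
      ring
    simp_rw [h1]
    rw [integral_const_mul]
    rfl
  -- Fubini for the left side
  have hmaster_left := master (gk ν) u (gk_measurable ν) hum hslice
    (by rw [hkereq]; exact hkerK)
  -- the reflected kernel
  set kr : ℝ → ℝ := fun y => gk ν (-y) with hkr
  have hkrm : Measurable kr := (gk_measurable ν).comp measurable_neg
  -- slice integrability (right kernel)
  have hslice' : ∀ᵐ p : ℝ × ℝ,
      Integrable fun x => kr (x - p.1) * u p.1 * (kr (x - p.2) * u p.2) := by
    filter_upwards [hae] with p hp
    have base : Integrable fun x => gk ν (x - p.1) * u p.1 * (gk ν (x - p.2) * u p.2) := by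
      have b0 := (gk_slice_integrable hν1 hν2 hp).const_mul (u p.1 * u p.2)
      have key : (fun x => gk ν (x - p.1) * u p.1 * (gk ν (x - p.2) * u p.2))
          = fun x => u p.1 * u p.2 * (gk ν (x - p.1) * gk ν (x - p.2)) := by
        funext x; ring
      rw [key]; exact b0
    have refl := base.comp_sub_left (p.1 + p.2)
    have key : (fun x => kr (x - p.1) * u p.1 * (kr (x - p.2) * u p.2))
        = fun x => gk ν ((p.1 + p.2 - x) - p.1) * u p.1
            * (gk ν ((p.1 + p.2 - x) - p.2) * u p.2) := by
      funext x
      simp only [hkr, neg_sub]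
      rw [show p.1 + p.2 - x - p.1 = p.2 - x by ring,
        show p.1 + p.2 - x - p.2 = p.1 - x by ring]
      ring
    rw [key]; exact refl
  -- ‖·‖-integral function for the right kernel: same as the left one
  have hkereq' : (fun p : ℝ × ℝ =>
        ∫ x, ‖kr (x - p.1) * u p.1 * (kr (x - p.2) * u p.2)‖)
      = fun p : ℝ × ℝ => |u p.1 * u p.2| * Kk ν p.1 p.2 := by
    funext p
    have h1 : ∀ x : ℝ, ‖kr (x - p.1) * u p.1 * (kr (x - p.2) * u p.2)‖
        = |u p.1 * u p.2| * (gk ν (p.1 - x) * gk ν (p.2 - x)) := by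
      intro x
      simp only [hkr, neg_sub]
      rw [Real.norm_eq_abs, abs_mul, abs_mul, abs_mul,
        abs_of_nonneg (gk_nonneg ν (p.1 - x)), abs_of_nonneg (gk_nonneg ν (p.2 - x)),
        abs_mul]
      ring
    simp_rw [h1]
    rw [integral_const_mul, Kk_reflect]
  -- Fubini for the right side
  have hmaster_right := master kr u hkrm hum hslice'
    (by rw [hkereq']; exact hkerK)
  -- the two double integrals agree pointwise in p
  have hinner : ∀ p : ℝ × ℝ,
      (∫ x : ℝ, kr (x - p.1) * u p.1 * (kr (x - p.2) * u p.2))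
        = ∫ x : ℝ, gk ν (x - p.1) * u p.1 * (gk ν (x - p.2) * u p.2) := by
    intro p
    rw [← integral_sub_left_eq_self
      (fun y => gk ν (y - p.1) * u p.1 * (gk ν (y - p.2) * u p.2)) volume (p.1 + p.2)]
    congr 1; funext x
    show kr (x - p.1) * u p.1 * (kr (x - p.2) * u p.2)
        = gk ν ((p.1 + p.2 - x) - p.1) * u p.1 * (gk ν ((p.1 + p.2 - x) - p.2) * u p.2)
    simp only [hkr, neg_sub]
    rw [show p.1 + p.2 - x - p.1 = p.2 - x by ring,
      show p.1 + p.2 - x - p.2 = p.1 - x by ring]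
    ring
  -- identify the RL integrals with the convolution forms
  have hleft : ∀ x : ℝ, leftRLIntegral μ u x
      = (1 / Real.Gamma μ) * ∫ s, gk ν (x - s) * u s := by
    intro x
    unfold leftRLIntegral
    congr 1
    have h1 : ∀ s : ℝ, gk ν (x - s) * u s
        = (Iio x).indicator (fun s => (x - s) ^ (μ - 1) * u s) s := by
      intro s
      by_cases hs : s ∈ Iio x
      · rw [indicator_of_mem hs, gk_of_pos (sub_pos.2 hs)]
      · rw [indicator_of_notMem hs,
          gk_of_nonpos (sub_nonpos.2 (not_lt.1 (by simpa using hs))), zero_mul]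
    rw [show (∫ s, gk ν (x - s) * u s)
        = ∫ s, (Iio x).indicator (fun s => (x - s) ^ (μ - 1) * u s) s from by
      simp_rw [h1]]
    rw [integral_indicator measurableSet_Iio]
  have hright : ∀ x : ℝ, rightRLIntegral μ u x
      = (1 / Real.Gamma μ) * ∫ s, kr (x - s) * u s := by
    intro x
    unfold rightRLIntegral
    congr 1
    have h1 : ∀ s : ℝ, kr (x - s) * u s
        = (Ioi x).indicator (fun s => (s - x) ^ (μ - 1) * u s) s := by
      intro s
      simp only [hkr, neg_sub]
      by_cases hs : s ∈ Ioi x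
      · rw [indicator_of_mem hs, gk_of_pos (sub_pos.2 hs)]
      · rw [indicator_of_notMem hs,
          gk_of_nonpos (sub_nonpos.2 (not_lt.1 (by simpa using hs))), zero_mul]
    rw [show (∫ s, kr (x - s) * u s)
        = ∫ s, (Ioi x).indicator (fun s => (s - x) ^ (μ - 1) * u s) s from by
      simp_rw [h1]]
    rw [integral_indicator measurableSet_Ioi]
  -- put everything together
  simp_rw [hleft, hright, mul_pow]
  rw [integral_const_mul, integral_const_mul, hmaster_left, hmaster_right]
  congr 1
  exact integral_congr_ae (ae_of_all _ fun p => (hinner p).symm)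
end

section
/- Let Ω = (a,b) × (c,d) be an open rectangle in ℝ² and let 0 < α₁ < 1. For all p, q ∈ L²(Ω), the bilinear form built from the partial left fractional integral in the x-variable is bounded: |∫_Ω (𝓘_x^{α₁} p)(x,y) · q(x,y) dx dy| ≤ ((b−a)^{α₁} / Γ(α₁+1)) · ‖p‖_{L²(Ω)} · ‖q‖_{L²(Ω)}. -/
/-!
The operator `p ↦ 𝓘_x^α p` acts on each horizontal line `y = const` as the integral operator
with the convolution kernel `t ^ (α - 1) / Γ(α)` restricted to `0 < t < b - a`; its row and
column integrals are therefore all at most `(b - a) ^ α / Γ(α + 1)`. The Schur test bounds the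
form on each line by that constant times the `L²` norms of the restrictions of `p` and `q` to
the line, and Cauchy–Schwarz in `y` assembles these into the `L²(Ω)` norms.
-/

open MeasureTheory Real Set

/-- Partial left Riemann–Liouville fractional integral in the `x`-variable, base point `a`:
`(𝓘_x^{α} p)(x,y) = (1/Γ(α)) ∫_a^x (x−s)^{α−1} p(s,y) ds`. -/
noncomputable def leftRLx (a α : ℝ) (p : ℝ × ℝ → ℝ) (z : ℝ × ℝ) : ℝ :=
  (1 / Real.Gamma α) * ∫ s in a..z.1, (z.1 - s) ^ (α - 1) * p (s, z.2)

open Function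
open scoped ENNReal

theorem ENNReal.lintegral_rpow_half_mul_le {α : Type*} [MeasurableSpace α] {μ : Measure α}
    {f g : α → ℝ≥0∞} (hf : AEMeasurable f μ) (hg : AEMeasurable g μ) :
    ∫⁻ x, f x ^ (1/2:ℝ) * g x ^ (1/2:ℝ) ∂μ ≤
      (∫⁻ x, f x ∂μ) ^ (1/2:ℝ) * (∫⁻ x, g x ∂μ) ^ (1/2:ℝ) := by
  have hsq : ∀ u : ℝ≥0∞, (u ^ (1/2:ℝ)) ^ (2:ℝ) = u := fun u => by
    rw [← ENNReal.rpow_mul]; norm_num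
  simpa only [hsq, Pi.mul_apply] using ENNReal.lintegral_mul_le_Lp_mul_Lq μ .two_two
    (hf.pow_const (1/2:ℝ)) (hg.pow_const (1/2:ℝ))

theorem eLpNorm_two_eq_of_enorm_ae_eq {α E : Type*} [MeasurableSpace α] {μ : Measure α}
    [NormedAddCommGroup E] {f : α → E} {F : α → ℝ≥0∞} (hF : (‖f ·‖ₑ) =ᵐ[μ] F) :
    eLpNorm f 2 μ = (∫⁻ x, F x ^ (2:ℝ) ∂μ) ^ (1/2:ℝ) := by
  rw [eLpNorm_eq_lintegral_rpow_enorm_toReal two_ne_zero ENNReal.ofNat_ne_top,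
    ENNReal.toReal_ofNat, one_div]
  exact congrArg (· ^ (2:ℝ)⁻¹) (lintegral_congr_ae (hF.fun_comp (· ^ (2:ℝ))))

theorem AEMeasurable.exists_measurable_ge_ae_eq {α : Type*} [MeasurableSpace α] {μ : Measure α}
    {f : α → ℝ≥0∞} (hf : AEMeasurable f μ) : ∃ g, Measurable g ∧ f ≤ g ∧ f =ᵐ[μ] g := by
  set N := toMeasurable μ {x | f x ≠ hf.mk f x}
  have hN : μ N = 0 := by rw [measure_toMeasurable]; exact hf.ae_eq_mk
  refine ⟨hf.mk f + N.indicator ⊤,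
    hf.measurable_mk.add (measurable_const.indicator (measurableSet_toMeasurable _ _)),
    fun x => ?_, ?_⟩
  · by_cases hx : x ∈ N
    · simp [hx]
    · have hfx : f x = hf.mk f x := by
        by_contra h
        exact hx (subset_toMeasurable _ _ h)
      simp [hx, hfx]
  · filter_upwards [hf.ae_eq_mk, measure_eq_zero_iff_ae_notMem.1 hN] with x hx hxN
    simp [hx, hxN]

section Schur

variable {X S : Type*} [MeasurableSpace X] [MeasurableSpace S] {μ : Measure X} {σ : Measure S}
  [SFinite σ] {K : X → S → ℝ≥0∞} {A : ℝ≥0∞}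

theorem lintegral_prod_mul_comp_fst_le (hK : Measurable (uncurry K))
    (hrow : ∀ x, ∫⁻ s, K x s ∂σ ≤ A) {h : X → ℝ≥0∞} (hh : Measurable h) :
    ∫⁻ w, K w.1 w.2 * h w.1 ∂(μ.prod σ) ≤ A * ∫⁻ x, h x ∂μ := by
  rw [lintegral_prod (fun w => K w.1 w.2 * h w.1) (hK.mul (hh.comp measurable_fst)).aemeasurable,
    ← lintegral_const_mul _ hh]
  refine lintegral_mono fun x => ?_
  exact (lintegral_mul_const _ hK.of_uncurry_left).trans_le (mul_le_mul_left (hrow x) _)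

theorem lintegral_prod_mul_comp_snd_le [SFinite μ] (hK : Measurable (uncurry K))
    (hcol : ∀ s, ∫⁻ x, K x s ∂μ ≤ A) {h : S → ℝ≥0∞} (hh : Measurable h) :
    ∫⁻ w, K w.1 w.2 * h w.2 ∂(μ.prod σ) ≤ A * ∫⁻ s, h s ∂σ := by
  rw [lintegral_prod_symm (fun w => K w.1 w.2 * h w.2)
      (hK.mul (hh.comp measurable_snd)).aemeasurable,
    ← lintegral_const_mul _ hh]
  refine lintegral_mono fun s => ?_
  exact (lintegral_mul_const _ hK.of_uncurry_right).trans_le (mul_le_mul_left (hcol s) _)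

theorem lintegral_lintegral_mul_le_of_schur [SFinite μ] (hK : Measurable (uncurry K))
    (hrow : ∀ x, ∫⁻ s, K x s ∂σ ≤ A) (hcol : ∀ s, ∫⁻ x, K x s ∂μ ≤ A)
    {f : S → ℝ≥0∞} {g : X → ℝ≥0∞} (hf : Measurable f) (hg : Measurable g) :
    ∫⁻ x, (∫⁻ s, K x s * f s ∂σ) * g x ∂μ ≤
      A * ((∫⁻ s, f s ^ (2:ℝ) ∂σ) ^ (1/2:ℝ) * (∫⁻ x, g x ^ (2:ℝ) ∂μ) ^ (1/2:ℝ)) := by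
  -- Cauchy–Schwarz for the measure with density `K` on `X × S`.
  set ρ := (μ.prod σ).withDensity (uncurry K)
  have hρ : ∀ {h : X × S → ℝ≥0∞}, Measurable h →
      ∫⁻ w, h w ∂ρ = ∫⁻ w, K w.1 w.2 * h w ∂(μ.prod σ) :=
    fun hh => lintegral_withDensity_eq_lintegral_mul _ hK hh
  have hfg : ∫⁻ x, (∫⁻ s, K x s * f s ∂σ) * g x ∂μ = ∫⁻ w, f w.2 * g w.1 ∂ρ := by
    rw [hρ (by fun_prop), lintegral_prod _ (by fun_prop)]
    refine lintegral_congr fun x => ?_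
    rw [← lintegral_mul_const _ (by fun_prop)]
    simp only [mul_assoc]
  calc ∫⁻ x, (∫⁻ s, K x s * f s ∂σ) * g x ∂μ
      ≤ (∫⁻ w, f w.2 ^ (2:ℝ) ∂ρ) ^ (1/2:ℝ) * (∫⁻ w, g w.1 ^ (2:ℝ) ∂ρ) ^ (1/2:ℝ) := by
        rw [hfg]
        exact ENNReal.lintegral_mul_le_Lp_mul_Lq ρ .two_two (by fun_prop) (by fun_prop)
    _ ≤ (A * ∫⁻ s, f s ^ (2:ℝ) ∂σ) ^ (1/2:ℝ) * (A * ∫⁻ x, g x ^ (2:ℝ) ∂μ) ^ (1/2:ℝ) := by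
        rw [hρ (by fun_prop), hρ (by fun_prop)]
        gcongr
        · exact lintegral_prod_mul_comp_snd_le hK hcol (by fun_prop)
        · exact lintegral_prod_mul_comp_fst_le hK hrow (by fun_prop)
    _ = A * ((∫⁻ s, f s ^ (2:ℝ) ∂σ) ^ (1/2:ℝ) * (∫⁻ x, g x ^ (2:ℝ) ∂μ) ^ (1/2:ℝ)) := by
        rw [ENNReal.mul_rpow_of_nonneg _ _ (by norm_num),
          ENNReal.mul_rpow_of_nonneg _ _ (by norm_num), mul_mul_mul_comm,
          ← ENNReal.rpow_add_of_nonneg _ _ (by norm_num) (by norm_num)]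
        norm_num

theorem lintegral_prod_lintegral_mul_le_of_schur {Z : Type*} [MeasurableSpace Z]
    {ν : Measure Z} [SFinite μ] [SFinite ν] (hK : Measurable (uncurry K))
    (hrow : ∀ x, ∫⁻ s, K x s ∂σ ≤ A) (hcol : ∀ s, ∫⁻ x, K x s ∂μ ≤ A)
    {F : S × Z → ℝ≥0∞} {G : X × Z → ℝ≥0∞} (hF : Measurable F) (hG : Measurable G) :
    ∫⁻ z, (∫⁻ s, K z.1 s * F (s, z.2) ∂σ) * G z ∂(μ.prod ν) ≤
      A * ((∫⁻ w, F w ^ (2:ℝ) ∂(σ.prod ν)) ^ (1/2:ℝ) *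
        (∫⁻ z, G z ^ (2:ℝ) ∂(μ.prod ν)) ^ (1/2:ℝ)) := by
  have hKF : Measurable fun z : X × Z => ∫⁻ s, K z.1 s * F (s, z.2) ∂σ :=
    Measurable.lintegral_prod_right' (f := fun w : (X × Z) × S => K w.1.1 w.2 * F (w.2, w.1.2))
      ((hK.comp (measurable_fst.fst.prodMk measurable_snd)).mul
        (hF.comp (measurable_snd.prodMk measurable_fst.snd)))
  have hF2 : Measurable fun y => ∫⁻ s, F (s, y) ^ (2:ℝ) ∂σ :=
    (hF.pow_const _).lintegral_prod_left'
  have hG2 : Measurable fun y => ∫⁻ x, G (x, y) ^ (2:ℝ) ∂μ :=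
    (hG.pow_const _).lintegral_prod_left'
  rw [lintegral_prod_symm (fun z => (∫⁻ s, K z.1 s * F (s, z.2) ∂σ) * G z)
      (hKF.mul hG).aemeasurable,
    lintegral_prod_symm (fun w => F w ^ (2:ℝ)) (hF.pow_const _).aemeasurable,
    lintegral_prod_symm (fun z => G z ^ (2:ℝ)) (hG.pow_const _).aemeasurable]
  calc ∫⁻ y, ∫⁻ x, (∫⁻ s, K x s * F (s, y) ∂σ) * G (x, y) ∂μ ∂ν
      ≤ ∫⁻ y, A * ((∫⁻ s, F (s, y) ^ (2:ℝ) ∂σ) ^ (1/2:ℝ) *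
          (∫⁻ x, G (x, y) ^ (2:ℝ) ∂μ) ^ (1/2:ℝ)) ∂ν :=
        lintegral_mono fun y => lintegral_lintegral_mul_le_of_schur hK hrow hcol
          (hF.comp measurable_prodMk_right) (hG.comp measurable_prodMk_right)
    _ ≤ A * ((∫⁻ y, ∫⁻ s, F (s, y) ^ (2:ℝ) ∂σ ∂ν) ^ (1/2:ℝ) *
          (∫⁻ y, ∫⁻ x, G (x, y) ^ (2:ℝ) ∂μ ∂ν) ^ (1/2:ℝ)) := by
        rw [lintegral_const_mul _ (by fun_prop)]
        gcongr
        exact ENNReal.lintegral_rpow_half_mul_le hF2.aemeasurable hG2.aemeasurable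

end Schur

noncomputable def truncRLKernel (α L t : ℝ) : ℝ≥0∞ :=
  (Ioo 0 L).indicator (fun t => ENNReal.ofReal (t ^ (α - 1))) t

theorem measurable_truncRLKernel (α L : ℝ) : Measurable (truncRLKernel α L) :=
  (measurable_id.pow_const _).ennreal_ofReal.indicator measurableSet_Ioo

theorem lintegral_truncRLKernel {α L : ℝ} (hα : 0 < α) (hL : 0 ≤ L) :
    ∫⁻ t, truncRLKernel α L t = ENNReal.ofReal (L ^ α / α) := by
  have hint : IntegrableOn (fun t : ℝ => t ^ (α - 1)) (Ioc 0 L) :=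
    (intervalIntegrable_iff_integrableOn_Ioc_of_le hL).1
      (intervalIntegral.intervalIntegrable_rpow' (by linarith))
  unfold truncRLKernel
  rw [lintegral_indicator measurableSet_Ioo, setLIntegral_congr Ioo_ae_eq_Ioc,
    ← ofReal_integral_eq_lintegral_ofReal hint, ← intervalIntegral.integral_of_le hL,
    integral_rpow (Or.inl (by linarith)), sub_add_cancel, zero_rpow hα.ne', sub_zero]
  filter_upwards [ae_restrict_mem measurableSet_Ioc] with t ht
  exact rpow_nonneg ht.1.le _

theorem enorm_leftRLx_le {a b α : ℝ} {p : ℝ × ℝ → ℝ} {F : ℝ × ℝ → ℝ≥0∞}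
    (hpF : ∀ z, ‖p z‖ₑ ≤ F z) {z : ℝ × ℝ} (hz : z.1 ∈ Ioo a b) :
    ‖leftRLx a α p z‖ₑ ≤
      ‖1 / Gamma α‖ₑ * ∫⁻ s in Ioo a b, truncRLKernel α (b - a) (z.1 - s) * F (s, z.2) := by
  obtain ⟨x, y⟩ := z
  unfold leftRLx
  rw [enorm_mul, intervalIntegral.integral_of_le hz.1.le]
  gcongr
  calc ‖∫ s in Ioc a x, (x - s) ^ (α - 1) * p (s, y)‖ₑ
      ≤ ∫⁻ s in Ioc a x, ‖(x - s) ^ (α - 1) * p (s, y)‖ₑ := enorm_integral_le_lintegral_enorm _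
    _ = ∫⁻ s in Ioo a x, ‖(x - s) ^ (α - 1) * p (s, y)‖ₑ :=
        setLIntegral_congr Ioo_ae_eq_Ioc.symm
    _ ≤ ∫⁻ s in Ioo a x, truncRLKernel α (b - a) (x - s) * F (s, y) := by
        refine setLIntegral_mono' measurableSet_Ioo fun s hs => ?_
        have hxs : x - s ∈ Ioo 0 (b - a) := ⟨sub_pos.2 hs.2, by linarith [hs.1, hz.2]⟩
        rw [enorm_mul, truncRLKernel, indicator_of_mem hxs,
          Real.enorm_eq_ofReal (rpow_nonneg hxs.1.le _)]
        gcongr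
        exact hpF _
    _ ≤ ∫⁻ s in Ioo a b, truncRLKernel α (b - a) (x - s) * F (s, y) :=
        lintegral_mono_set (Ioo_subset_Ioo_right hz.2.le)

theorem lintegral_enorm_leftRLx_mul_le {a b c d α : ℝ} (hab : a ≤ b) (hα : 0 < α)
    {p q : ℝ × ℝ → ℝ} (hp : AEStronglyMeasurable p (volume.restrict (Ioo a b ×ˢ Ioo c d)))
    (hq : AEStronglyMeasurable q (volume.restrict (Ioo a b ×ˢ Ioo c d))) :
    ∫⁻ z in Ioo a b ×ˢ Ioo c d, ‖leftRLx a α p z * q z‖ₑ ≤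
      ENNReal.ofReal ((b - a) ^ α / Gamma (α + 1)) *
        (eLpNorm p 2 (volume.restrict (Ioo a b ×ˢ Ioo c d)) *
          eLpNorm q 2 (volume.restrict (Ioo a b ×ˢ Ioo c d))) := by
  set μ : Measure ℝ := volume.restrict (Ioo a b)
  set ν : Measure ℝ := volume.restrict (Ioo c d)
  have hΩ : volume.restrict (Ioo a b ×ˢ Ioo c d) = μ.prod ν := (Measure.prod_restrict _ _).symm
  -- `leftRLx a α p` reads `p` along single lines `y = const`, which a null modification of `p`
  -- may change, so `p` and `q` are dominated everywhere by measurable functions.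
  obtain ⟨F, hFm, hpF, hpF_ae⟩ := hp.enorm.exists_measurable_ge_ae_eq
  obtain ⟨G, hGm, hqG, hqG_ae⟩ := hq.enorm.exists_measurable_ge_ae_eq
  set K : ℝ → ℝ → ℝ≥0∞ := fun x s => truncRLKernel α (b - a) (x - s)
  have hK : Measurable (uncurry K) :=
    (measurable_truncRLKernel α _).comp (measurable_fst.sub measurable_snd)
  have hkernel := lintegral_truncRLKernel hα (sub_nonneg.2 hab)
  have hrow : ∀ x, ∫⁻ s, K x s ∂μ ≤ ENNReal.ofReal ((b - a) ^ α / α) := fun x =>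
    (setLIntegral_le_lintegral _ _).trans_eq ((lintegral_sub_left_eq_self _ x).trans hkernel)
  have hcol : ∀ s, ∫⁻ x, K x s ∂μ ≤ ENNReal.ofReal ((b - a) ^ α / α) := fun s =>
    (setLIntegral_le_lintegral _ _).trans_eq ((lintegral_sub_right_eq_self _ s).trans hkernel)
  have hconst : ‖1 / Gamma α‖ₑ * ENNReal.ofReal ((b - a) ^ α / α) =
      ENNReal.ofReal ((b - a) ^ α / Gamma (α + 1)) := by
    have hΓ := Gamma_pos_of_pos hα
    rw [Real.enorm_eq_ofReal (by positivity), ← ENNReal.ofReal_mul (by positivity),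
      Gamma_add_one hα.ne']
    congr 1
    field_simp
  calc ∫⁻ z in Ioo a b ×ˢ Ioo c d, ‖leftRLx a α p z * q z‖ₑ
      ≤ ∫⁻ z in Ioo a b ×ˢ Ioo c d, ‖1 / Gamma α‖ₑ * ((∫⁻ s, K z.1 s * F (s, z.2) ∂μ) * G z) :=
        setLIntegral_mono' (measurableSet_Ioo.prod measurableSet_Ioo) fun z hz => by
          rw [enorm_mul, ← mul_assoc]
          exact mul_le_mul' (enorm_leftRLx_le hpF hz.1) (hqG z)
    _ = ‖1 / Gamma α‖ₑ * ∫⁻ z, (∫⁻ s, K z.1 s * F (s, z.2) ∂μ) * G z ∂(μ.prod ν) := by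
        rw [hΩ, lintegral_const_mul' _ _ enorm_ne_top]
    _ ≤ ‖1 / Gamma α‖ₑ * (ENNReal.ofReal ((b - a) ^ α / α) *
          ((∫⁻ w, F w ^ (2:ℝ) ∂(μ.prod ν)) ^ (1/2:ℝ) *
            (∫⁻ z, G z ^ (2:ℝ) ∂(μ.prod ν)) ^ (1/2:ℝ))) := by
        gcongr
        exact lintegral_prod_lintegral_mul_le_of_schur hK hrow hcol hFm hGm
    _ = _ := by
        rw [← mul_assoc, hconst, eLpNorm_two_eq_of_enorm_ae_eq hpF_ae,
          eLpNorm_two_eq_of_enorm_ae_eq hqG_ae, hΩ]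

theorem stmt13_general (a b c d α₁ : ℝ) (hab : a < b)
    (hα0 : 0 < α₁) (p q : ℝ × ℝ → ℝ)
    (hp : MemLp p 2 (volume.restrict (Set.Ioo a b ×ˢ Set.Ioo c d)))
    (hq : MemLp q 2 (volume.restrict (Set.Ioo a b ×ˢ Set.Ioo c d))) :
    |∫ z in Set.Ioo a b ×ˢ Set.Ioo c d, leftRLx a α₁ p z * q z| ≤
      ((b - a) ^ α₁ / Real.Gamma (α₁ + 1)) *
        ((eLpNorm p 2 (volume.restrict (Set.Ioo a b ×ˢ Set.Ioo c d))).toReal *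
          (eLpNorm q 2 (volume.restrict (Set.Ioo a b ×ˢ Set.Ioo c d))).toReal) := by
  have hC : 0 ≤ (b - a) ^ α₁ / Gamma (α₁ + 1) :=
    div_nonneg (rpow_nonneg (sub_nonneg.2 hab.le) _) (Gamma_pos_of_pos (by linarith)).le
  have hfinite : ENNReal.ofReal ((b - a) ^ α₁ / Gamma (α₁ + 1)) *
      (eLpNorm p 2 (volume.restrict (Ioo a b ×ˢ Ioo c d)) *
        eLpNorm q 2 (volume.restrict (Ioo a b ×ˢ Ioo c d))) ≠ ∞ :=
    ENNReal.mul_ne_top ENNReal.ofReal_ne_top (ENNReal.mul_ne_top hp.2.ne hq.2.ne)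
  rw [← Real.norm_eq_abs, ← toReal_enorm, ← ENNReal.toReal_ofReal hC, ← ENNReal.toReal_mul,
    ← ENNReal.toReal_mul]
  exact ENNReal.toReal_mono hfinite ((enorm_integral_le_lintegral_enorm _).trans
    (lintegral_enorm_leftRLx_mul_le hab.le hα0 hp.1 hq.1))

theorem stmt13 (a b c d α₁ : ℝ) (hab : a < b) (hcd : c < d)
    (hα0 : 0 < α₁) (hα1 : α₁ < 1) (p q : ℝ × ℝ → ℝ)
    (hp : MemLp p 2 (volume.restrict (Set.Ioo a b ×ˢ Set.Ioo c d)))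
    (hq : MemLp q 2 (volume.restrict (Set.Ioo a b ×ˢ Set.Ioo c d))) :
    |∫ z in Set.Ioo a b ×ˢ Set.Ioo c d, leftRLx a α₁ p z * q z| ≤
      ((b - a) ^ α₁ / Real.Gamma (α₁ + 1)) *
        ((eLpNorm p 2 (volume.restrict (Set.Ioo a b ×ˢ Set.Ioo c d))).toReal *
          (eLpNorm q 2 (volume.restrict (Set.Ioo a b ×ˢ Set.Ioo c d))).toReal) :=
  stmt13_general a b c d α₁ hab hα0 p q hp hq
end
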